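/- Let n, m, r ∈ ℕ, B ∈ ℝ^{n×m}, D ∈ ℝ^{n×n}, C₀ ∈ ℝ^{n×r}, K ∈ ℝ^{m×2n}, and scalars α, γ, ρ, μ, β, π, κ all positive. Let S ∈ ℝ^{r×r} and P ∈ ℝ^{2n×2n} be symmetric positive definite. Define M := A_Kᵀ P + P A_K + μ P E₀ E₀ᵀ P + μ^{-1} Kᵀ Bᵀ B K + β P F₀ F₀ᵀ P + β^{-1} γ^{-2} G₀ᵀ G₀ + π P G₀ᵀ G₀ P + π^{-1} α^{-2} G₀ᵀ Dᵀ D G₀ + κ P G₀ᵀ G₀ P. Assume (i) M + ρP is negative definite, and (ii) the symmetric block matrix [ρS, C₀ᵀ; C₀, κI_n] is positive definite. Then for every ζ ∈ ℝ^r with ζ ≠ 0 and every x ∈ ℝ^{2n} with σ := G₀x ≠ 0 one has xᵀ R(σ) M R(σ) x + κ^{-1} ζᵀ C₀ᵀ C₀ ζ < ρ ( ζᵀ S ζ − xᵀ R(σ) P R(σ) x ). -/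

import Mathlib

/-! Conjugating by the invertible symmetric matrix `R(σ)` preserves the negative definiteness of
`M + ρP`, so `xᵀRMRx < -ρ xᵀRPRx`. Evaluating the positive definite block matrix
`[ρS, C₀ᵀ; C₀, κI]` at the test vector `(ζ, -κ⁻¹C₀ζ)` gives the strict Schur-complement bound
`κ⁻¹ ζᵀC₀ᵀC₀ζ < ρ ζᵀSζ`. Adding the two inequalities gives the claim. -/

open Matrix

noncomputable section

/-- Euclidean norm of a real vector. -/
def enorm {n : ℕ} (v : Fin n → ℝ) : ℝ := Real.sqrt (v ⬝ᵥ v)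

/-- The block matrix `G₀ = [I_n 0] ∈ ℝ^{n×2n}`. -/
def G0 (n : ℕ) : Matrix (Fin n) (Fin n ⊕ Fin n) ℝ := fromCols 1 0

/-- The block matrix `F₀ = [0; I_n] ∈ ℝ^{2n×n}`. -/
def F0 (n : ℕ) : Matrix (Fin n ⊕ Fin n) (Fin n) ℝ := fromRows 0 1

/-- The block matrix `E₀ = [(1/2)I_n; 0] ∈ ℝ^{2n×n}`. -/
def E0 (n : ℕ) : Matrix (Fin n ⊕ Fin n) (Fin n) ℝ := fromRows ((2 : ℝ)⁻¹ • 1) 0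

/-- The block matrix `A₀ = [[0,0],[I_n,0]] ∈ ℝ^{2n×2n}`. -/
def A0 (n : ℕ) : Matrix (Fin n ⊕ Fin n) (Fin n ⊕ Fin n) ℝ := fromBlocks 0 0 1 0

/-- The scalar gain `c(σ) = 1/√‖σ‖ + α`. -/
def cfun {n : ℕ} (α : ℝ) (σ : Fin n → ℝ) : ℝ := 1 / Real.sqrt (enorm σ) + α

/-- The matrix `R(σ) = diag(c(σ)I_n, I_n)`. -/
def Rmat {n : ℕ} (α : ℝ) (σ : Fin n → ℝ) : Matrix (Fin n ⊕ Fin n) (Fin n ⊕ Fin n) ℝ :=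
  fromBlocks (cfun α σ • 1) 0 0 1

theorem dotProduct_transpose_mul_mul_mulVec_lt_of_posDef_neg {ι : Type*} [Fintype ι]
    {M P R : Matrix ι ι ℝ} {ρ : ℝ} (h : (-(M + ρ • P)).PosDef)
    (hR : Function.Injective R.mulVec) {x : ι → ℝ} (hx : x ≠ 0) :
    x ⬝ᵥ ((Rᵀ * M * R) *ᵥ x) < -(ρ * (x ⬝ᵥ ((Rᵀ * P * R) *ᵥ x))) := by
  have hpos := (h.conjTranspose_mul_mul_same hR).dotProduct_mulVec_pos hx
  have hsplit : Rᴴ * -(M + ρ • P) * R = -(Rᵀ * M * R + ρ • (Rᵀ * P * R)) := by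
    rw [conjTranspose_eq_transpose_of_trivial]
    simp only [Matrix.mul_neg, Matrix.neg_mul, Matrix.mul_add, Matrix.add_mul,
      Matrix.mul_smul, Matrix.smul_mul]
  rw [hsplit, star_trivial, neg_mulVec, add_mulVec, smul_mulVec, dotProduct_neg,
    dotProduct_add, dotProduct_smul, smul_eq_mul] at hpos
  linarith

theorem dotProduct_mulVec_lt_of_posDef_fromBlocks_smul_one {m n : Type*}
    [Fintype m] [Fintype n] [DecidableEq n] {A : Matrix m m ℝ} {C : Matrix n m ℝ} {κ : ℝ}
    (hκ : κ ≠ 0) (h : (fromBlocks A Cᵀ C (κ • (1 : Matrix n n ℝ))).PosDef)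
    {ζ : m → ℝ} (hζ : ζ ≠ 0) :
    κ⁻¹ * (ζ ⬝ᵥ ((Cᵀ * C) *ᵥ ζ)) < ζ ⬝ᵥ (A *ᵥ ζ) := by
  set u := C *ᵥ ζ
  set w := Sum.elim ζ (-(κ⁻¹ • u))
  have hw : w ≠ 0 := fun hw0 => hζ (funext fun i => congrFun hw0 (Sum.inl i))
  have hCt : ∀ v, ζ ⬝ᵥ (Cᵀ *ᵥ v) = u ⬝ᵥ v := fun v => by
    rw [dotProduct_mulVec, vecMul_transpose]
  have hw_val : star w ⬝ᵥ (fromBlocks A Cᵀ C (κ • 1) *ᵥ w) =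
      ζ ⬝ᵥ (A *ᵥ ζ) - κ⁻¹ * (u ⬝ᵥ u) := by
    rw [star_trivial, fromBlocks_mulVec, sumElim_dotProduct_sumElim]
    simp only [w, Sum.elim_comp_inl, Sum.elim_comp_inr, dotProduct_add, hCt, smul_mulVec,
      one_mulVec, dotProduct_neg, neg_dotProduct, dotProduct_smul, smul_dotProduct, smul_eq_mul]
    field_simp
    ring
  have hpos := h.dotProduct_mulVec_pos hw
  rw [hw_val] at hpos
  rw [← mulVec_mulVec, hCt]
  linarith

theorem cfun_pos {n : ℕ} {α : ℝ} (hα : 0 < α) (σ : Fin n → ℝ) : 0 < cfun α σ := by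
  unfold cfun
  positivity

theorem Rmat_transpose {n : ℕ} (α : ℝ) (σ : Fin n → ℝ) : (Rmat α σ)ᵀ = Rmat α σ := by
  simp [Rmat, fromBlocks_transpose]

theorem det_Rmat {n : ℕ} (α : ℝ) (σ : Fin n → ℝ) : (Rmat α σ).det = cfun α σ ^ n := by
  simp [Rmat]

theorem Rmat_mulVec_injective {n : ℕ} {α : ℝ} {σ : Fin n → ℝ} (hc : cfun α σ ≠ 0) :
    Function.Injective (Rmat α σ).mulVec :=
  mulVec_injective_of_det_ne_zero (by rw [det_Rmat]; exact pow_ne_zero _ hc)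

theorem stmt6_general {n r : ℕ} (C0 : Matrix (Fin n) (Fin r) ℝ) (α ρ κ : ℝ) (hα : 0 < α) (hκ : 0 < κ)
    (S : Matrix (Fin r) (Fin r) ℝ) (P : Matrix (Fin n ⊕ Fin n) (Fin n ⊕ Fin n) ℝ)
    (M : Matrix (Fin n ⊕ Fin n) (Fin n ⊕ Fin n) ℝ)
    (h1 : (-(M + ρ • P)).PosDef)
    (h2 : (fromBlocks (ρ • S) C0ᵀ C0 (κ • (1 : Matrix (Fin n) (Fin n) ℝ))).PosDef) :
    ∀ (ζ : Fin r → ℝ), ζ ≠ 0 → ∀ (x : Fin n ⊕ Fin n → ℝ), G0 n *ᵥ x ≠ 0 →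
      x ⬝ᵥ ((Rmat α (G0 n *ᵥ x) * M * Rmat α (G0 n *ᵥ x)) *ᵥ x)
        + κ⁻¹ * (ζ ⬝ᵥ ((C0ᵀ * C0) *ᵥ ζ)) <
      ρ * (ζ ⬝ᵥ (S *ᵥ ζ) - x ⬝ᵥ ((Rmat α (G0 n *ᵥ x) * P * Rmat α (G0 n *ᵥ x)) *ᵥ x)) := by
  intro ζ hζ x hx
  have hx0 : x ≠ 0 := by
    rintro rfl
    exact hx (mulVec_zero _)
  have hx_part := dotProduct_transpose_mul_mul_mulVec_lt_of_posDef_neg h1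
    (Rmat_mulVec_injective (cfun_pos hα (G0 n *ᵥ x)).ne') hx0
  rw [Rmat_transpose] at hx_part
  have hζ_part := dotProduct_mulVec_lt_of_posDef_fromBlocks_smul_one hκ.ne' h2 hζ
  rw [smul_mulVec, dotProduct_smul, smul_eq_mul] at hζ_part
  linarith

/-- Lemma 2 of the paper: the matrix inequalities (43) and (44) imply the algebraic
inequality behind `V̇ < ρ c(σ)(v − V)`. -/
theorem stmt6 {n m r : ℕ} (B : Matrix (Fin n) (Fin m) ℝ) (D : Matrix (Fin n) (Fin n) ℝ)
    (C0 : Matrix (Fin n) (Fin r) ℝ) (K : Matrix (Fin m) (Fin n ⊕ Fin n) ℝ)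
    (α γ ρ μ β π κ : ℝ) (hα : 0 < α) (hγ : 0 < γ) (hρ : 0 < ρ) (hμ : 0 < μ)
    (hβ : 0 < β) (hπ : 0 < π) (hκ : 0 < κ)
    (S : Matrix (Fin r) (Fin r) ℝ) (P : Matrix (Fin n ⊕ Fin n) (Fin n ⊕ Fin n) ℝ)
    (hS : S.PosDef) (hP : P.PosDef)
    (M : Matrix (Fin n ⊕ Fin n) (Fin n ⊕ Fin n) ℝ)
    (hM : M = (A0 n + fromRows B 0 * K)ᵀ * P + P * (A0 n + fromRows B 0 * K)
      + μ • (P * E0 n * (E0 n)ᵀ * P) + μ⁻¹ • (Kᵀ * Bᵀ * B * K)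
      + β • (P * F0 n * (F0 n)ᵀ * P) + (β⁻¹ * (γ ^ 2)⁻¹) • ((G0 n)ᵀ * G0 n)
      + π • (P * (G0 n)ᵀ * G0 n * P)
      + (π⁻¹ * (α ^ 2)⁻¹) • ((G0 n)ᵀ * Dᵀ * D * G0 n)
      + κ • (P * (G0 n)ᵀ * G0 n * P))
    (h1 : (-(M + ρ • P)).PosDef)
    (h2 : (fromBlocks (ρ • S) C0ᵀ C0 (κ • (1 : Matrix (Fin n) (Fin n) ℝ))).PosDef) :
    ∀ (ζ : Fin r → ℝ), ζ ≠ 0 → ∀ (x : Fin n ⊕ Fin n → ℝ), G0 n *ᵥ x ≠ 0 →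
      x ⬝ᵥ ((Rmat α (G0 n *ᵥ x) * M * Rmat α (G0 n *ᵥ x)) *ᵥ x)
        + κ⁻¹ * (ζ ⬝ᵥ ((C0ᵀ * C0) *ᵥ ζ)) <
      ρ * (ζ ⬝ᵥ (S *ᵥ ζ) - x ⬝ᵥ ((Rmat α (G0 n *ᵥ x) * P * Rmat α (G0 n *ᵥ x)) *ᵥ x)) :=
  stmt6_general C0 α ρ κ hα hκ S P M h1 h2
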